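/- Let n ≥ 1, let U ⊆ ℝⁿ be open and convex, let f : ℝⁿ → ℝⁿ be continuously differentiable on U with Jacobian J_f, let x, y ∈ U, and let A : ℝⁿ → ℝⁿ be an invertible linear map. Assume: (A★1) there is ω★ > 0 such that for every t ∈ [0,1], writing z = t·x + (1−t)·y, one has ‖A⁻¹ (J_f(x) − J_f(z)) (x − y)‖ ≤ ω★ (1−t) ‖x − y‖²; and (A★2) ‖Id − A⁻¹ J_f(x)‖ ≤ κ★ for some κ★ ∈ [0,1). Then the map g(v) = v − A⁻¹ f(v) satisfies ‖g(x) − g(y)‖ ≤ (κ★ + (ω★/2) ‖x − y‖) · ‖x − y‖. -/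

import Mathlib

/-!
Along the segment `z t = t • x + (1 - t) • y` the map `g v = v - A⁻¹ (f v)` has velocity
`(Id - A⁻¹ J (z t)) (x - y) = (Id - A⁻¹ J x) (x - y) + A⁻¹ (J x - J (z t)) (x - y)`,
whose norm is at most `κ‖x - y‖ + ω (1 - t) ‖x - y‖²` by (A★2) and (A★1). Comparing with the
antiderivative `κ‖x - y‖ t + ω (t - t² / 2) ‖x - y‖²` of this bound (the fencing form of the
mean value inequality) gives `κ‖x - y‖ + (ω / 2)‖x - y‖²` at `t = 1`.
-/

open Set

variable {E F : Type*} [NormedAddCommGroup E] [NormedSpace ℝ E]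
  [NormedAddCommGroup F] [NormedSpace ℝ F]

theorem norm_sub_le_of_norm_deriv_le_affine {φ φ' : ℝ → F} {a b : ℝ}
    (hφ : ∀ t ∈ Icc (0 : ℝ) 1, HasDerivAt φ (φ' t) t)
    (bound : ∀ t ∈ Icc (0 : ℝ) 1, ‖φ' t‖ ≤ a + b * (1 - t)) :
    ‖φ 1 - φ 0‖ ≤ a + b / 2 := by
  have hB : ∀ t : ℝ, HasDerivAt (fun t => a * t + b * (t - t ^ 2 / 2)) (a + b * (1 - t)) t := by
    intro t
    refine (((hasDerivAt_id' t).const_mul a).add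
      (((hasDerivAt_id' t).sub ((hasDerivAt_pow 2 t).div_const 2)).const_mul b)).congr_deriv ?_
    ring
  have fence := image_norm_le_of_norm_deriv_right_le_deriv_boundary
    (f := fun t => φ t - φ 0) (a := 0) (b := 1)
    (fun t ht => ((hφ t ht).sub_const (φ 0)).continuousAt.continuousWithinAt)
    (fun t ht => ((hφ t (Ico_subset_Icc_self ht)).sub_const (φ 0)).hasDerivWithinAt)
    (by simp) hB (fun t ht => bound t (Ico_subset_Icc_self ht))
    (right_mem_Icc.2 zero_le_one)
  convert fence using 1
  ring

theorem hasDerivAt_comp_segment {g : E → F} {g' : E → E →L[ℝ] F} {s : Set E}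
    (hs : Convex ℝ s) (hg : ∀ z ∈ s, HasFDerivAt g (g' z) z) {x y : E}
    (hx : x ∈ s) (hy : y ∈ s) {t : ℝ} (ht : t ∈ Icc (0 : ℝ) 1) :
    HasDerivAt (fun t : ℝ => g (t • x + (1 - t) • y))
      (g' (t • x + (1 - t) • y) (x - y)) t := by
  have hz : HasDerivAt (fun t : ℝ => t • x + (1 - t) • y) (x - y) t := by
    have h : HasDerivAt (fun t : ℝ => t • x + (1 - t) • y) ((1 : ℝ) • x + (-1 : ℝ) • y) t :=
      ((hasDerivAt_id' t).smul_const x).add (((hasDerivAt_id' t).const_sub 1).smul_const y)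
    rwa [one_smul, neg_one_smul, ← sub_eq_add_neg] at h
  exact (hg _ (hs hx hy ht.1 (by linarith [ht.2]) (by ring))).comp_hasDerivAt t hz

theorem norm_id_sub_comp_apply_le (B : F →L[ℝ] E) (L M : E →L[ℝ] F) (v : E) :
    ‖(ContinuousLinearMap.id ℝ E - B.comp M) v‖
      ≤ ‖ContinuousLinearMap.id ℝ E - B.comp L‖ * ‖v‖ + ‖B ((L - M) v)‖ := by
  have split : (ContinuousLinearMap.id ℝ E - B.comp M) v
      = (ContinuousLinearMap.id ℝ E - B.comp L) v + B ((L - M) v) := by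
    simp only [sub_apply, ContinuousLinearMap.id_apply,
      ContinuousLinearMap.comp_apply, map_sub]
    abel
  rw [split]
  exact (norm_add_le _ _).trans
    (add_le_add_left ((ContinuousLinearMap.id ℝ E - B.comp L).le_opNorm v) _)

theorem norm_newton_map_sub_le {s : Set E} (hs : Convex ℝ s) {f : E → E} {J : E → E →L[ℝ] E}
    (hf : ∀ z ∈ s, HasFDerivAt f (J z) z) {x y : E} (hx : x ∈ s) (hy : y ∈ s) (A : E ≃L[ℝ] E)
    {ω κ : ℝ}
    (hA1 : ∀ t ∈ Icc (0 : ℝ) 1,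
      ‖A.symm ((J x - J (t • x + (1 - t) • y)) (x - y))‖ ≤ ω * (1 - t) * ‖x - y‖ ^ 2)
    (hA2 : ‖ContinuousLinearMap.id ℝ E - (A.symm : E →L[ℝ] E).comp (J x)‖ ≤ κ) :
    ‖(x - A.symm (f x)) - (y - A.symm (f y))‖ ≤ (κ + ω / 2 * ‖x - y‖) * ‖x - y‖ := by
  have hg : ∀ z ∈ s, HasFDerivAt (fun v => v - A.symm (f v))
      (ContinuousLinearMap.id ℝ E - (A.symm : E →L[ℝ] E).comp (J z)) z :=
    fun z hz => (hasFDerivAt_id z).sub (A.symm.hasFDerivAt.comp z (hf z hz))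
  have bound : ∀ t ∈ Icc (0 : ℝ) 1,
      ‖(ContinuousLinearMap.id ℝ E - (A.symm : E →L[ℝ] E).comp (J (t • x + (1 - t) • y)))
        (x - y)‖ ≤ κ * ‖x - y‖ + ω * ‖x - y‖ ^ 2 * (1 - t) := fun t ht =>
    calc _ ≤ _ := norm_id_sub_comp_apply_le _ (J x) _ _
      _ ≤ κ * ‖x - y‖ + ω * (1 - t) * ‖x - y‖ ^ 2 := add_le_add (by gcongr) (hA1 t ht)
      _ = κ * ‖x - y‖ + ω * ‖x - y‖ ^ 2 * (1 - t) := by ring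
  have mvt := norm_sub_le_of_norm_deriv_le_affine
    (fun t ht => hasDerivAt_comp_segment hs hg hx hy ht) bound
  simp only [one_smul, sub_self, zero_smul, add_zero, sub_zero, zero_add] at mvt
  linarith

theorem simplified_newton_contraction_estimate_general
    {n : ℕ}
    (U : Set (EuclideanSpace ℝ (Fin n))) (hUconv : Convex ℝ U)
    (f : EuclideanSpace ℝ (Fin n) → EuclideanSpace ℝ (Fin n))
    (J : EuclideanSpace ℝ (Fin n) →
      (EuclideanSpace ℝ (Fin n) →L[ℝ] EuclideanSpace ℝ (Fin n)))
    (hf : ∀ x ∈ U, HasFDerivAt f (J x) x)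
    (x y : EuclideanSpace ℝ (Fin n)) (hx : x ∈ U) (hy : y ∈ U)
    (A : EuclideanSpace ℝ (Fin n) ≃L[ℝ] EuclideanSpace ℝ (Fin n))
    (ω κ : ℝ)
    (hA1 : ∀ t ∈ Set.Icc (0:ℝ) 1,
      ‖A.symm ((J x - J (t • x + (1 - t) • y)) (x - y))‖
        ≤ ω * (1 - t) * ‖x - y‖ ^ 2)
    (hA2 : ‖ContinuousLinearMap.id ℝ (EuclideanSpace ℝ (Fin n))
        - (A.symm : EuclideanSpace ℝ (Fin n) →L[ℝ] EuclideanSpace ℝ (Fin n)).comp (J x)‖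
        ≤ κ) :
    ‖(x - A.symm (f x)) - (y - A.symm (f y))‖ ≤ (κ + ω / 2 * ‖x - y‖) * ‖x - y‖ :=
  norm_newton_map_sub_le hUconv hf hx hy A hA1 hA2

/-- **Contraction estimate** (pointwise version): under (A★1) along the segment from
`y` to `x` and (A★2) at `x`, the simplified Newton map `g v = v - A⁻¹ (f v)` satisfies
`‖g x - g y‖ ≤ (κ★ + (ω★/2)‖x - y‖)·‖x - y‖`. -/
theorem simplified_newton_contraction_estimate
    {n : ℕ} (hn : 1 ≤ n)
    (U : Set (EuclideanSpace ℝ (Fin n))) (hUopen : IsOpen U) (hUconv : Convex ℝ U)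
    (f : EuclideanSpace ℝ (Fin n) → EuclideanSpace ℝ (Fin n))
    (J : EuclideanSpace ℝ (Fin n) →
      (EuclideanSpace ℝ (Fin n) →L[ℝ] EuclideanSpace ℝ (Fin n)))
    (hf : ∀ x ∈ U, HasFDerivAt f (J x) x)
    (hJcont : ContinuousOn J U)
    (x y : EuclideanSpace ℝ (Fin n)) (hx : x ∈ U) (hy : y ∈ U)
    (A : EuclideanSpace ℝ (Fin n) ≃L[ℝ] EuclideanSpace ℝ (Fin n))
    (ω κ : ℝ) (hω : 0 < ω) (hκ0 : 0 ≤ κ) (hκ1 : κ < 1)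
    (hA1 : ∀ t ∈ Set.Icc (0:ℝ) 1,
      ‖A.symm ((J x - J (t • x + (1 - t) • y)) (x - y))‖
        ≤ ω * (1 - t) * ‖x - y‖ ^ 2)
    (hA2 : ‖ContinuousLinearMap.id ℝ (EuclideanSpace ℝ (Fin n))
        - (A.symm : EuclideanSpace ℝ (Fin n) →L[ℝ] EuclideanSpace ℝ (Fin n)).comp (J x)‖
        ≤ κ) :
    ‖(x - A.symm (f x)) - (y - A.symm (f y))‖ ≤ (κ + ω / 2 * ‖x - y‖) * ‖x - y‖ :=
  simplified_newton_contraction_estimate_general U hUconv f J hf x y hx hy A ω κ hA1 hA2
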